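/- Let r ≥ 2 and let P : [r]² → {0,1} be a binary predicate such that for all two-element subsets B, C ⊆ [r] the restriction P|_{B×C} is not a singleton. Then there exist an integer ℓ with 2 ≤ ℓ ≤ 2r and a function f mapping each assignment A : V → [r] to an assignment f(A) : V^γ → [ℓ] such that for every finite set V, every weighted directed graph G on vertex set V, and every assignment A : V → [r], Val_{G,P}(A) = Val_{γ(G), ℓ-Cut}(f(A)), where ℓ-Cut : [ℓ]² → {0,1} is defined by ℓ-Cut(x,y) = 1 iff x ≠ y. -/

import Mathlib

/-!
The zero set `Z = {(x, y) | P x y = 0}` is closed under completing rectangles: three zeros at the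
corners of a `2 × 2` submatrix force the fourth, for otherwise the submatrix would be a singleton.
Hence rows sharing a zero have the same zero set, and `P x y = 0` iff the zero set of row `x`
equals a label `τ y` of column `y`. Colouring `u⁽⁰⁾` by the label of the row `A u` and `v⁽¹⁾` by
the label of the column `A v` turns every edge satisfied by `P` into an edge cut in `γ(G)`;
at most `2r` labels occur.
-/

/-- The value of a binary CSP instance with predicate `P`, edge/scope set `S`,
weights `w`, under assignment `A`. -/
def cspVal {W D : Type*} (P : D → D → Bool) (S : Finset (W × W)) (w : W × W → ℝ)
    (A : W → D) : ℝ :=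
  ∑ e ∈ S, w e * (if P (A e.1) (A e.2) then 1 else 0)

/-- The restriction of `P` to `B × C` is a singleton: exactly one pair
`(b,c) ∈ B × C` satisfies `P b c = 1`. -/
def IsSingletonRestr {D : Type*} (P : D → D → Bool) (B C : Finset D) : Prop :=
  ∃! p : D × D, p.1 ∈ B ∧ p.2 ∈ C ∧ P p.1 p.2 = true

/-- Edge set of the bipartite double cover: `(u, v) ↦ (u⁽⁰⁾, v⁽¹⁾)`, where
`u⁽⁰⁾ = Sum.inl u` and `v⁽¹⁾ = Sum.inr v`. -/
def dcEdges {V : Type*} [DecidableEq V] (E : Finset (V × V)) :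
    Finset ((V ⊕ V) × (V ⊕ V)) :=
  E.image fun e => (Sum.inl e.1, Sum.inr e.2)

/-- Weights of the bipartite double cover: `w^γ(u⁽⁰⁾, v⁽¹⁾) = w(u, v)`. -/
def dcWeight {V : Type*} (w : V × V → ℝ) : (V ⊕ V) × (V ⊕ V) → ℝ
  | (Sum.inl u, Sum.inr v) => w (u, v)
  | _ => 0

/-- The `ℓ-Cut` predicate: `ℓCut x y = 1` iff `x ≠ y`. -/
def ellCut {ℓ : ℕ} : Fin ℓ → Fin ℓ → Bool := fun x y => decide (x ≠ y)

section Rectangles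

variable {α β : Type*}

/-- `τ y` is the zero set of some row with a zero in column `y`, or everything if there is none;
either way `y ∈ τ y`, so no empty row can match it. -/
theorem exists_rowSet_eq_iff_of_rect (Z : α → β → Prop)
    (hZ : ∀ x x' y y', Z x y → Z x' y → Z x y' → Z x' y') :
    ∃ τ : β → Set β, ∀ x y, Z x y ↔ {y' | Z x y'} = τ y := by
  classical
  refine ⟨fun y => if h : ∃ x, Z x y then {y' | Z h.choose y'} else Set.univ, fun x y => ?_⟩
  have mem_τ : y ∈ (if h : ∃ x, Z x y then {y' | Z h.choose y'} else Set.univ) := by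
    split_ifs with h
    exacts [h.choose_spec, trivial]
  constructor
  · intro hxy
    have h : ∃ x, Z x y := ⟨x, hxy⟩
    dsimp only
    rw [dif_pos h]
    ext y'
    exact ⟨hZ x h.choose y y' hxy h.choose_spec, hZ h.choose x y y' h.choose_spec hxy⟩
  · intro hrow
    dsimp only at hrow
    rw [← hrow] at mem_τ
    exact mem_τ

theorem exists_fin_eq_iff_of_card_le [Fintype α] {γ : Type*} (c : α → γ) {n : ℕ}
    (hn : Fintype.card α ≤ n) : ∃ c' : α → Fin n, ∀ i j, c' i = c' j ↔ c i = c j := by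
  classical
  let e : Set.range c ↪ Fin n := (Fintype.equivFin _).toEmbedding.trans
    (Fin.castLEEmb ((Fintype.card_range_le c).trans hn))
  refine ⟨fun i => e (Set.rangeFactorization c i), fun i j => ?_⟩
  rw [e.apply_eq_iff_eq, Subtype.ext_iff]
  rfl

theorem exists_fin_eq_iff_of_rect [Fintype α] [Fintype β] (Z : α → β → Prop)
    (hZ : ∀ x x' y y', Z x y → Z x' y → Z x y' → Z x' y') {n : ℕ}
    (hn : Fintype.card α + Fintype.card β ≤ n) :
    ∃ (σ : α → Fin n) (τ : β → Fin n), ∀ x y, Z x y ↔ σ x = τ y := by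
  obtain ⟨τ, hτ⟩ := exists_rowSet_eq_iff_of_rect Z hZ
  obtain ⟨c, hc⟩ := exists_fin_eq_iff_of_card_le (n := n)
    (Sum.elim (fun x => {y' | Z x y'}) τ) (by rwa [Fintype.card_sum])
  exact ⟨c ∘ Sum.inl, c ∘ Sum.inr, fun x y => (hτ x y).trans (hc (.inl x) (.inr y)).symm⟩

end Rectangles

theorem rect_of_not_isSingletonRestr {D : Type*} [DecidableEq D] {P : D → D → Bool}
    (hP : ∀ B C : Finset D, B.card = 2 → C.card = 2 → ¬ IsSingletonRestr P B C)
    (x x' y y' : D) (hxy : P x y = false) (hx'y : P x' y = false) (hxy' : P x y' = false) :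
    P x' y' = false := by
  rcases eq_or_ne x x' with rfl | hx
  · exact hxy'
  rcases eq_or_ne y y' with rfl | hy
  · exact hx'y
  by_contra hx'y'
  refine hP {x, x'} {y, y'} (Finset.card_pair hx) (Finset.card_pair hy)
    ⟨(x', y'), ⟨by simp, by simp, by simpa using hx'y'⟩, ?_⟩
  rintro ⟨a, b⟩ ⟨ha, hb, hab⟩
  simp only [Finset.mem_insert, Finset.mem_singleton] at ha hb
  rcases ha with rfl | rfl <;> rcases hb with rfl | rfl <;> simp_all

theorem cspVal_eq_cspVal_doubleCover {V D D' : Type*} [DecidableEq V] {P : D → D → Bool}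
    {Q : D' → D' → Bool} {σ τ : D → D'} (hPQ : ∀ x y, P x y = Q (σ x) (τ y))
    (E : Finset (V × V)) (w : V × V → ℝ) (A : V → D) :
    cspVal P E w A = cspVal Q (dcEdges E) (dcWeight w) (Sum.elim (σ ∘ A) (τ ∘ A)) := by
  unfold cspVal dcEdges
  rw [Finset.sum_image fun e _ e' _ h => by simpa [Prod.ext_iff] using h]
  refine Finset.sum_congr rfl fun _ _ => ?_
  simp only [dcWeight, Sum.elim_inl, Sum.elim_inr, Function.comp_apply, hPQ]
  rfl

/-- if no restriction of `P : [r]² → {0,1}` (with `r ≥ 2`) to a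
product of two-element subdomains is a singleton, then there are `2 ≤ ℓ ≤ 2r`
and, for every finite set `V`, a map `f` turning assignments `A : V → [r]` into
assignments `V^γ → [ℓ]` such that the value of any weighted directed graph `G`
on `V` under `P` equals the value of its bipartite double cover under `ℓ-Cut`
at `f(A)`. -/
theorem stmt5 {r : ℕ} (hr : 2 ≤ r) (P : Fin r → Fin r → Bool)
    (hP : ∀ B C : Finset (Fin r), B.card = 2 → C.card = 2 →
      ¬ IsSingletonRestr P B C) :
    ∃ ℓ : ℕ, 2 ≤ ℓ ∧ ℓ ≤ 2 * r ∧
      ∀ (V : Type) [Fintype V] [DecidableEq V],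
        ∃ f : (V → Fin r) → (V ⊕ V → Fin ℓ),
          ∀ (E : Finset (V × V)), (∀ e ∈ E, e.1 ≠ e.2) →
          ∀ w : V × V → ℝ, (∀ e ∈ E, 0 < w e) →
          ∀ A : V → Fin r,
            cspVal P E w A = cspVal ellCut (dcEdges E) (dcWeight w) (f A) := by
  obtain ⟨σ, τ, hστ⟩ := exists_fin_eq_iff_of_rect (fun x y => P x y = false)
    (rect_of_not_isSingletonRestr hP) (n := 2 * r) (by rw [Fintype.card_fin, two_mul])
  have hP_cut : ∀ x y, P x y = ellCut (σ x) (τ y) := fun x y => by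
    have := hστ x y
    cases h : P x y <;> simp_all [ellCut]
  refine ⟨2 * r, by omega, le_rfl, fun V _ _ => ⟨fun A => Sum.elim (σ ∘ A) (τ ∘ A), ?_⟩⟩
  intro E _ w _ A
  exact cspVal_eq_cspVal_doubleCover hP_cut E w A
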